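/- arXiv:2006.03878 — 2 statements merged into one kernel-verified Lean document; each statement's English description precedes it below -/
import Mathlib

section
/- For complex numbers $z$ and $q$ with $|q|<1$, the infinite product $\prod_{i=1}^{\infty}(1+zq^i)$ equals the sum $\sum_{m=0}^{\infty} \frac{z^m q^{m(m+1)/2}}{(1-q)(1-q^2)\cdots(1-q^m)}$ (Euler's identity). -/
/-- `(q)ₙ = ∏_{k=1}^n (1 - q^k)` -/
noncomputable def qPoch (q : ℂ) (n : ℕ) : ℂ := ∏ k ∈ Finset.range n, (1 - q ^ (k + 1))

/-!
Write `F(z) = ∑ₘ zᵐ q^{m(m+1)/2} / (q)ₘ`. Comparing coefficients gives the functional equation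
`F(z) = (1 + zq) F(zq)`, hence `F(z) = ∏_{i=1}^{n} (1 + zqⁱ) · F(zqⁿ)` for every `n`. As `n → ∞`
the product tends to the infinite product and `F(zqⁿ) → F(0) = 1`, by dominated convergence.
-/

open Finset Filter Topology

noncomputable def eulerTerm (q z : ℂ) (m : ℕ) : ℂ :=
  z ^ m * q ^ (m * (m + 1) / 2) / qPoch q m

section

variable {q : ℂ}

lemma qPoch_succ (q : ℂ) (m : ℕ) : qPoch q (m + 1) = qPoch q m * (1 - q ^ (m + 1)) :=
  prod_range_succ _ _

lemma one_sub_norm_le_norm_one_sub_pow_succ (hq : ‖q‖ ≤ 1) (k : ℕ) :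
    1 - ‖q‖ ≤ ‖1 - q ^ (k + 1)‖ := by
  have hpow : ‖q ^ (k + 1)‖ ≤ ‖q‖ := by
    rw [norm_pow]
    exact pow_le_of_le_one (norm_nonneg q) hq k.succ_ne_zero
  calc 1 - ‖q‖ ≤ ‖(1 : ℂ)‖ - ‖q ^ (k + 1)‖ := by rw [norm_one]; linarith
    _ ≤ ‖1 - q ^ (k + 1)‖ := norm_sub_norm_le _ _

lemma one_sub_norm_pow_le_norm_qPoch (hq : ‖q‖ ≤ 1) (m : ℕ) :
    (1 - ‖q‖) ^ m ≤ ‖qPoch q m‖ := by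
  simpa [qPoch, norm_prod] using prod_le_prod (s := range m) (fun _ _ => sub_nonneg.mpr hq)
    fun k _ => one_sub_norm_le_norm_one_sub_pow_succ hq k

lemma one_sub_pow_succ_ne_zero (hq : ‖q‖ < 1) (k : ℕ) : 1 - q ^ (k + 1) ≠ 0 := by
  rw [← norm_pos_iff]
  linarith [one_sub_norm_le_norm_one_sub_pow_succ hq.le k]

lemma triangle_succ (m : ℕ) : (m + 1) * (m + 1 + 1) / 2 = m * (m + 1) / 2 + (m + 1) := by
  have h : (m + 1) * (m + 1 + 1) = m * (m + 1) + 2 * (m + 1) := by ring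
  omega

lemma eulerTerm_zero (q z : ℂ) : eulerTerm q z 0 = 1 := by
  simp [eulerTerm, qPoch]

lemma eulerTerm_succ (q z : ℂ) (m : ℕ) :
    eulerTerm q z (m + 1) = eulerTerm q z m * (z * q ^ (m + 1)) / (1 - q ^ (m + 1)) := by
  rw [eulerTerm, eulerTerm, qPoch_succ, triangle_succ, pow_add, ← div_div]
  ring

lemma eulerTerm_succ_eq_add (hq : ‖q‖ < 1) (z : ℂ) (m : ℕ) :
    eulerTerm q z (m + 1) = eulerTerm q (z * q) (m + 1) + z * q * eulerTerm q (z * q) m := by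
  have hne := one_sub_pow_succ_ne_zero hq m
  rw [eulerTerm_succ, eulerTerm_succ, eulerTerm, eulerTerm]
  field_simp
  ring

lemma tsum_eulerTerm_zero (q : ℂ) : ∑' m, eulerTerm q 0 m = 1 := by
  rw [tsum_eq_single 0 fun m hm => by simp [eulerTerm, hm], eulerTerm_zero]

lemma norm_eulerTerm_le (hq : ‖q‖ < 1) (z : ℂ) (m : ℕ) :
    ‖eulerTerm q z m‖ ≤ (‖z‖ / (1 - ‖q‖)) ^ m := by
  have hpow : ‖q‖ ^ (m * (m + 1) / 2) ≤ 1 := pow_le_one₀ (norm_nonneg q) hq.le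
  rw [eulerTerm, norm_div, norm_mul, norm_pow, norm_pow, div_pow]
  exact div_le_div₀ (by positivity) (mul_le_of_le_one_right (by positivity) hpow)
    (pow_pos (sub_pos.mpr hq) m) (one_sub_norm_pow_le_norm_qPoch hq.le m)

/-- Ratio test: the ratio of consecutive terms is `z q^{m+1} / (1 - q^{m+1}) → 0`. -/
lemma summable_eulerTerm (hq : ‖q‖ < 1) (z : ℂ) : Summable (eulerTerm q z) := by
  refine summable_of_ratio_norm_eventually_le one_half_lt_one ?_
  have hlim : Tendsto (fun m : ℕ => ‖z‖ * ‖q‖ ^ (m + 1) / (1 - ‖q‖)) atTop (𝓝 0) := by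
    simpa using (((tendsto_pow_atTop_nhds_zero_of_lt_one (norm_nonneg q) hq).comp
      (tendsto_add_atTop_nat 1)).const_mul ‖z‖).div_const (1 - ‖q‖)
  filter_upwards [hlim.eventually_le_const one_half_pos] with m hm
  have hratio : ‖z * q ^ (m + 1)‖ / ‖1 - q ^ (m + 1)‖ ≤ 1 / 2 :=
    calc ‖z * q ^ (m + 1)‖ / ‖1 - q ^ (m + 1)‖
        ≤ ‖z * q ^ (m + 1)‖ / (1 - ‖q‖) :=
          div_le_div_of_nonneg_left (norm_nonneg _) (sub_pos.mpr hq)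
            (one_sub_norm_le_norm_one_sub_pow_succ hq.le m)
      _ = ‖z‖ * ‖q‖ ^ (m + 1) / (1 - ‖q‖) := by rw [norm_mul, norm_pow]
      _ ≤ 1 / 2 := hm
  calc ‖eulerTerm q z (m + 1)‖
      = ‖z * q ^ (m + 1)‖ / ‖1 - q ^ (m + 1)‖ * ‖eulerTerm q z m‖ := by
        rw [eulerTerm_succ, norm_div, norm_mul]; ring
    _ ≤ 1 / 2 * ‖eulerTerm q z m‖ := mul_le_mul_of_nonneg_right hratio (norm_nonneg _)

lemma tsum_eulerTerm_eq_mul (hq : ‖q‖ < 1) (z : ℂ) :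
    ∑' m, eulerTerm q z m = (1 + z * q) * ∑' m, eulerTerm q (z * q) m := by
  have hsum := summable_eulerTerm hq (z * q)
  calc ∑' m, eulerTerm q z m
      = 1 + ∑' m, (eulerTerm q (z * q) (m + 1) + z * q * eulerTerm q (z * q) m) := by
        rw [(summable_eulerTerm hq z).tsum_eq_zero_add, eulerTerm_zero,
          tsum_congr (eulerTerm_succ_eq_add hq z)]
    _ = (1 + z * q) * ∑' m, eulerTerm q (z * q) m := by
        rw [((summable_nat_add_iff 1).mpr hsum).tsum_add (hsum.mul_left _), tsum_mul_left,
          hsum.tsum_eq_zero_add, eulerTerm_zero]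
        ring

lemma tsum_eulerTerm_eq_prod_mul (hq : ‖q‖ < 1) (z : ℂ) (n : ℕ) :
    ∑' m, eulerTerm q z m =
      (∏ i ∈ range n, (1 + z * q ^ (i + 1))) * ∑' m, eulerTerm q (z * q ^ n) m := by
  induction n with
  | zero => simp
  | succ n ih =>
    rw [ih, prod_range_succ, tsum_eulerTerm_eq_mul hq, mul_assoc z, ← pow_succ]
    ring

/-- Continuity of the series at `z = 0`: for `‖z‖ ≤ (1 - ‖q‖)/2` the terms are dominated by `2⁻ᵐ`. -/
lemma tendsto_tsum_eulerTerm_nhds_zero (hq : ‖q‖ < 1) :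
    Tendsto (fun z => ∑' m, eulerTerm q z m) (𝓝 0) (𝓝 1) := by
  have hgap : 0 < 1 - ‖q‖ := sub_pos.mpr hq
  rw [← tsum_eulerTerm_zero q]
  refine tendsto_tsum_of_dominated_convergence (bound := fun m => (1 / 2 : ℝ) ^ m)
    summable_geometric_two (fun m => ?_) ?_
  · exact (show Continuous fun z => eulerTerm q z m by unfold eulerTerm; fun_prop).tendsto 0
  · filter_upwards [Metric.closedBall_mem_nhds (0 : ℂ) (half_pos hgap)] with z hz m
    rw [mem_closedBall_zero_iff] at hz
    refine (norm_eulerTerm_le hq z m).trans (pow_le_pow_left₀ (by positivity) ?_ m)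
    rw [div_le_iff₀ hgap]
    linarith

end

/-- Euler's identity: `∏_{i≥1} (1+zqⁱ) = ∑_{m≥0} z^m q^{m(m+1)/2}/(q)_m`. -/
theorem euler_identity (z q : ℂ) (hq : ‖q‖ < 1) :
    ∏' i : ℕ, (1 + z * q ^ (i + 1)) =
      ∑' m : ℕ, z ^ m * q ^ (m * (m + 1) / 2) / qPoch q m := by
  have hsummable : Summable fun i : ℕ => z * q ^ (i + 1) := by
    simpa [pow_succ', mul_assoc] using (summable_geometric_of_norm_lt_one hq).mul_left (z * q)
  have hprod := (Complex.multipliable_one_add_of_summable hsummable).hasProd.tendsto_prod_nat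
  have htail : Tendsto (fun n : ℕ => ∑' m, eulerTerm q (z * q ^ n) m) atTop (𝓝 1) :=
    (tendsto_tsum_eulerTerm_nhds_zero hq).comp <| by
      simpa using (tendsto_pow_atTop_nhds_zero_of_norm_lt_one hq).const_mul z
  have hconst : Tendsto (fun n : ℕ => (∏ i ∈ range n, (1 + z * q ^ (i + 1))) *
      ∑' m, eulerTerm q (z * q ^ n) m) atTop (𝓝 (∑' m, eulerTerm q z m)) :=
    tendsto_const_nhds.congr (tsum_eulerTerm_eq_prod_mul hq z)
  simpa [eulerTerm] using tendsto_nhds_unique (hprod.mul htail) hconst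
end

section
/- For complex numbers $z_1, \ldots, z_N$ with $|z_j| < 1$ for all $j$: $\prod_{j=1}^{N} \frac{1}{1-z_j} = 1 + \sum_{j=1}^{N} \frac{h_j(z_j, z_{j+1}, \ldots, z_N)}{(1-z_1)(1-z_2)\cdots(1-z_j)}$, where $h_j(z_j, \ldots, z_N)$ is the complete homogeneous symmetric polynomial of degree $j$ in the variables $z_j, z_{j+1}, \ldots, z_N$. -/
/-!
Index the variables from `0`, let `S n` be the sum of all monomials of degree at most `n` in
`z n, …, z (N - 1)` and let `P n = ∏_{k < n} (1 - z k)`. The monomials of degree at most `n + 1`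
in `z n, …, z (N - 1)` add up both to `S (n + 1) + z n * S n` (split by whether `z n` occurs) and
to `S n + h_{n+1}(z n, …, z (N - 1))` (split by degree). Hence
`S (n + 1) = (1 - z n) * S n + h_{n+1}(z n, …, z (N - 1))`, so the ratio `S n / P n` grows by
exactly the `n`-th summand of the right-hand side at each step. Since `S 0 = P 0 = S N = 1`,
telescoping from `0` to `N` gives the identity.
-/

open Finset

section CompleteHomogeneous

variable {ι R : Type*} [DecidableEq ι]

lemma mem_piAntidiag_iff_sum_univ [Fintype ι] {s : Finset ι} {d : ℕ} {β : ι → ℕ} :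
    β ∈ s.piAntidiag d ↔ ∑ k, β k = d ∧ ∀ k ∉ s, β k = 0 := by
  have hsupp : (∀ k, β k ≠ 0 → k ∈ s) ↔ ∀ k ∉ s, β k = 0 :=
    forall_congr' fun _ => not_imp_comm
  rw [mem_piAntidiag, hsupp]
  refine and_congr_left fun hβ => ?_
  rw [sum_subset (subset_univ s) fun k _ hk => hβ k hk]

section CommSemiring

variable [CommSemiring R] (z : ι → R)

def completeHomogeneous (s : Finset ι) (d : ℕ) : R :=
  ∑ β ∈ s.piAntidiag d, ∏ k ∈ s, z k ^ β k

@[simp]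
lemma completeHomogeneous_zero (s : Finset ι) : completeHomogeneous z s 0 = 1 := by
  simp [completeHomogeneous]

@[simp]
lemma completeHomogeneous_empty_succ (d : ℕ) : completeHomogeneous z ∅ (d + 1) = 0 := by
  simp [completeHomogeneous]

lemma completeHomogeneous_insert {i : ι} {s : Finset ι} (hi : i ∉ s) (d : ℕ) :
    completeHomogeneous z (insert i s) d =
      ∑ p ∈ antidiagonal d, z i ^ p.1 * completeHomogeneous z s p.2 := by
  rw [completeHomogeneous, ← cons_eq_insert _ _ hi, piAntidiag_cons, sum_disjiUnion]
  refine sum_congr rfl fun p _ => ?_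
  rw [completeHomogeneous, mul_sum, sum_map]
  refine sum_congr rfl fun β hβ => ?_
  have hβi : β i = 0 := by
    by_contra h
    exact hi ((mem_piAntidiag.1 hβ).2 i h)
  rw [prod_cons]
  simp only [addRightEmbedding_apply, Pi.add_apply, hβi, zero_add]
  congr 1
  refine prod_congr rfl fun k hk => ?_
  rw [if_neg (ne_of_mem_of_not_mem hk hi), add_zero]

lemma completeHomogeneous_insert_succ {i : ι} {s : Finset ι} (hi : i ∉ s) (d : ℕ) :
    completeHomogeneous z (insert i s) (d + 1) =
      completeHomogeneous z s (d + 1) + z i * completeHomogeneous z (insert i s) d := by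
  simp only [completeHomogeneous_insert z hi, Nat.sum_antidiagonal_succ, pow_zero, one_mul,
    pow_succ', mul_sum, mul_assoc]

def completeHomogeneousUpTo (s : Finset ι) (n : ℕ) : R :=
  ∑ d ∈ range (n + 1), completeHomogeneous z s d

lemma completeHomogeneousUpTo_insert_succ {i : ι} {s : Finset ι} (hi : i ∉ s) (n : ℕ) :
    completeHomogeneousUpTo z (insert i s) (n + 1) =
      completeHomogeneousUpTo z s (n + 1) + z i * completeHomogeneousUpTo z (insert i s) n := by
  simp only [completeHomogeneousUpTo, sum_range_succ' _ (n + 1),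
    completeHomogeneous_insert_succ z hi, sum_add_distrib, mul_sum, completeHomogeneous_zero]
  ring

lemma completeHomogeneousUpTo_succ (s : Finset ι) (n : ℕ) :
    completeHomogeneousUpTo z s (n + 1) =
      completeHomogeneousUpTo z s n + completeHomogeneous z s (n + 1) :=
  sum_range_succ _ _

lemma completeHomogeneousUpTo_empty (n : ℕ) : completeHomogeneousUpTo z ∅ n = 1 := by
  simp [completeHomogeneousUpTo, sum_range_succ']

lemma completeHomogeneous_eq_sum_prod_univ [Fintype ι] (s : Finset ι) (d : ℕ) :
    completeHomogeneous z s d = ∑ β ∈ s.piAntidiag d, ∏ k, z k ^ β k := by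
  refine sum_congr rfl fun β hβ => prod_subset (subset_univ s) fun k _ hk => ?_
  rw [(mem_piAntidiag_iff_sum_univ.1 hβ).2 k hk, pow_zero]

end CommSemiring

lemma completeHomogeneousUpTo_erase [CommRing R] (z : ι → R) {i : ι} {s : Finset ι}
    (hi : i ∈ s) (n : ℕ) :
    completeHomogeneousUpTo z (s.erase i) (n + 1) =
      (1 - z i) * completeHomogeneousUpTo z s n + completeHomogeneous z s (n + 1) := by
  have h := completeHomogeneousUpTo_insert_succ z (notMem_erase i s) n
  rw [insert_erase hi, completeHomogeneousUpTo_succ z s] at h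
  linear_combination -h

end CompleteHomogeneous

section Fin

variable {N : ℕ}

/-- In the paper's `1`-based indexing these are the variables `z_{n+1}, …, z_N`. -/
def indicesFrom (N n : ℕ) : Finset (Fin N) := univ.filter fun k => n ≤ (k : ℕ)

lemma indicesFrom_zero : indicesFrom N 0 = univ := by
  simp [indicesFrom]

lemma indicesFrom_self : indicesFrom N N = ∅ := by
  simp [indicesFrom, Fin.is_lt]

lemma mem_indicesFrom_self (j : Fin N) : j ∈ indicesFrom N j := by
  simp [indicesFrom]

lemma indicesFrom_succ (j : Fin N) : indicesFrom N (j + 1) = (indicesFrom N j).erase j := by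
  ext k
  simp only [indicesFrom, mem_erase, mem_filter, mem_univ, true_and, ne_eq, Fin.ext_iff]
  omega

lemma compl_indicesFrom_succ (j : Fin N) :
    (indicesFrom N (j + 1))ᶜ = univ.filter fun k => k ≤ j := by
  ext k
  simp only [indicesFrom, mem_compl, mem_filter, mem_univ, true_and, Fin.le_def]
  omega

lemma piAntidiag_indicesFrom (j : Fin N) :
    (indicesFrom N j).piAntidiag ((j : ℕ) + 1) =
      (Fintype.piFinset fun _ : Fin N => range ((j : ℕ) + 2)).filter
        (fun β => (∀ k, k < j → β k = 0) ∧ ∑ k, β k = (j : ℕ) + 1) := by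
  ext β
  have hsupp : (∀ k ∉ indicesFrom N j, β k = 0) ↔ ∀ k, k < j → β k = 0 := by
    simp [indicesFrom]
  rw [mem_piAntidiag_iff_sum_univ, hsupp, mem_filter, Fintype.mem_piFinset]
  refine ⟨fun ⟨hd, hβ⟩ => ⟨fun k => ?_, hβ, hd⟩,
    fun ⟨_, hβ, hd⟩ => ⟨hd, hβ⟩⟩
  have := single_le_sum (fun k _ => Nat.zero_le (β k)) (mem_univ k)
  rw [mem_range]
  omega

variable {K : Type*} [Field K] (z : Fin N → K)

def partialRatio (n : ℕ) : K :=
  completeHomogeneousUpTo z (indicesFrom N n) n / ∏ k ∈ (indicesFrom N n)ᶜ, (1 - z k)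

lemma partialRatio_zero : partialRatio z 0 = 1 := by
  simp [partialRatio, indicesFrom_zero, completeHomogeneousUpTo]

lemma partialRatio_self : partialRatio z N = ∏ k, (1 - z k)⁻¹ := by
  rw [partialRatio, indicesFrom_self, completeHomogeneousUpTo_empty, compl_empty, prod_inv_distrib,
    one_div]

lemma partialRatio_succ_sub (hz : ∀ k, 1 - z k ≠ 0) (j : Fin N) :
    partialRatio z (j + 1) - partialRatio z j =
      completeHomogeneous z (indicesFrom N j) (j + 1) /
        ∏ k ∈ univ.filter (fun k => k ≤ j), (1 - z k) := by
  have hj := mem_indicesFrom_self j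
  have hS : completeHomogeneousUpTo z (indicesFrom N (j + 1)) (j + 1) =
      (1 - z j) * completeHomogeneousUpTo z (indicesFrom N j) j +
        completeHomogeneous z (indicesFrom N j) (j + 1) := by
    rw [indicesFrom_succ]
    exact completeHomogeneousUpTo_erase z hj j
  have hP : ∏ k ∈ (indicesFrom N (j + 1))ᶜ, (1 - z k) =
      (1 - z j) * ∏ k ∈ (indicesFrom N j)ᶜ, (1 - z k) := by
    rw [indicesFrom_succ, compl_erase, prod_insert (notMem_compl.2 hj)]
  rw [partialRatio, partialRatio, ← compl_indicesFrom_succ, hS, hP]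
  field_simp [hz j]
  ring

end Fin

/-- Level-of-tiling identity:
`∏_{j=1}^N 1/(1-z_j) = 1 + ∑_{j=1}^N h_j(z_j,…,z_N) / ((1-z_1)⋯(1-z_j))`,
where `h_j` is the complete homogeneous symmetric polynomial of degree `j`
in the variables `z_j, …, z_N` (here indexed by `Fin N`, so the 1-indexed
index `j` corresponds to `(j : Fin N) + 1`, and the degree is `(j:ℕ)+1`). -/
theorem tiling_level_identity (N : ℕ) (z : Fin N → ℂ) (hz : ∀ j, ‖z j‖ < 1) :
    ∏ j, (1 - z j)⁻¹ =
      1 + ∑ j : Fin N,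
        (∑ β ∈ (Fintype.piFinset fun _ : Fin N => Finset.range ((j : ℕ) + 2)).filter
            (fun β => (∀ k, k < j → β k = 0) ∧ ∑ k, β k = (j : ℕ) + 1),
          ∏ k, z k ^ β k) /
        ∏ k ∈ Finset.univ.filter (fun k => k ≤ j), (1 - z k) := by
  have hz1 (j : Fin N) : 1 - z j ≠ 0 := sub_ne_zero.2 fun h => by simpa [← h] using hz j
  calc ∏ j, (1 - z j)⁻¹
      = partialRatio z 0 + ∑ j ∈ range N, (partialRatio z (j + 1) - partialRatio z j) := by
        rw [sum_range_sub, partialRatio_self]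
        ring
    _ = 1 + ∑ j : Fin N, (partialRatio z (j + 1) - partialRatio z j) := by
        rw [partialRatio_zero,
          Fin.sum_univ_eq_sum_range fun j => partialRatio z (j + 1) - partialRatio z j]
    _ = _ := by
        simp only [partialRatio_succ_sub z hz1, completeHomogeneous_eq_sum_prod_univ,
          piAntidiag_indicesFrom]
end
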